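/- arXiv:0804.4287 — 2 statements merged into one kernel-verified Lean document; each statement's English description precedes it below -/
import Mathlib

section
/- Let p, q ≥ 1 and let G be the graph on {0,1,...,p+q} consisting of the complete bipartite graph with parts V_1 = {1,...,p} and V_2 = {p+1,...,p+q}, a loop at vertex 0, and all edges {0,j} for 1 ≤ j ≤ p+q. Then for every positive integer m, the number of lattice points in the m-th dilate of the edge polytope P_G equals C(p+m, p)·C(q+m, q). -/
open Pointwise

/-- `ρ({i,j}) = e_i + e_j` (so a loop `{i,i}` maps to `2e_i`). -/
noncomputable def rho {d : ℕ} : Sym2 (Fin d) → (Fin d → ℝ) :=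
  Sym2.lift ⟨fun i j t => (if t = i then (1 : ℝ) else 0) + (if t = j then 1 else 0),
    fun i j => funext fun t => add_comm _ _⟩

/-!
The vertex `0` of `G` is adjacent to everything and `V₁ ∪ V₂` is complete bipartite, so the edges
of `G` are exactly the pairs `{σ i, τ j}`, where `σ` identifies `{0, …, p}` with `{0} ∪ V₁` and
`τ` identifies `{0, …, q}` with `{0} ∪ V₂`. Hence `P_G` is the image of the product of simplices
`Δ_p × Δ_q` under the linear map `(f, g) ↦ σ_* f + τ_* g`, which sends the vertex `(e_i, e_j)` to
`ρ{σ i, τ j}`. On `mΔ_p × mΔ_q` this map is injective and matches lattice points with lattice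
points: all coordinates of `f` and `g` except the two glued at the apex are coordinates of the
image, and those two are then fixed by `∑ f = ∑ g = m`. The lattice points of `mP_G` are therefore
counted by pairs of compositions of `m` into `p + 1` and `q + 1` parts.
-/

open Finset Function Set

def latticePoints {V : Type*} (K : Set (V → ℝ)) : Set (V → ℝ) :=
  {x | x ∈ K ∧ ∀ t, ∃ z : ℤ, x t = z}

section Integrality

variable {ι : Type*}

theorem exists_int_sum {s : Finset ι} {f : ι → ℝ} (hf : ∀ i ∈ s, ∃ z : ℤ, f i = z) :
    ∃ z : ℤ, ∑ i ∈ s, f i = z :=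
  Finset.sum_induction f (fun r => ∃ z : ℤ, r = z)
    (fun _ _ ⟨z, hz⟩ ⟨w, hw⟩ => ⟨z + w, by rw [hz, hw]; push_cast; rfl⟩) ⟨0, by simp⟩ hf

theorem exists_int_extend_apply {V : Type*} {σ : ι → V} {f : ι → ℝ} (hf : ∀ i, ∃ z : ℤ, f i = z)
    (v : V) : ∃ z : ℤ, extend σ f 0 v = z := by
  classical
  rw [extend_def]
  split_ifs
  exacts [hf _, ⟨0, by simp⟩]

variable [Fintype ι] [DecidableEq ι]

theorem exists_int_apply_of_sum {f : ι → ℝ} {i₀ : ι} (hsum : ∃ z : ℤ, ∑ i, f i = z)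
    (hne : ∀ i ≠ i₀, ∃ z : ℤ, f i = z) (i : ι) : ∃ z : ℤ, f i = z := by
  rcases eq_or_ne i i₀ with rfl | hi
  · obtain ⟨z, hz⟩ := hsum
    obtain ⟨w, hw⟩ := exists_int_sum fun j hj => hne j (ne_of_mem_erase hj)
    rw [← add_sum_erase univ f (mem_univ i), hw] at hz
    exact ⟨z - w, by push_cast; linarith⟩
  · exact hne i hi

theorem eq_of_sum_eq_of_forall_ne {M : Type*} [AddCommGroup M] {f g : ι → M} {i₀ : ι}
    (hsum : ∑ i, f i = ∑ i, g i) (hne : ∀ i ≠ i₀, f i = g i) : f = g := by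
  funext i
  rcases eq_or_ne i i₀ with rfl | hi
  · rwa [← add_sum_erase univ f (mem_univ i), ← add_sum_erase univ g (mem_univ i),
      sum_congr rfl fun j hj => hne j (ne_of_mem_erase hj), add_left_inj] at hsum
  · exact hne i hi

end Integrality

section Simplex

variable {ι : Type*} [Fintype ι]

theorem mem_smul_stdSimplex {r : ℝ} (hr : 0 < r) {x : ι → ℝ} :
    x ∈ r • stdSimplex ℝ ι ↔ (∀ i, 0 ≤ x i) ∧ ∑ i, x i = r := by
  rw [mem_smul_set_iff_inv_smul_mem₀ hr.ne']
  simp only [stdSimplex, mem_ofPred_eq, Pi.smul_apply, smul_eq_mul, ← mul_sum,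
    inv_mul_eq_one₀ hr.ne', eq_comm (a := r), inv_pos.2 hr, mul_nonneg_iff_of_pos_left]

theorem latticePoints_smul_stdSimplex [DecidableEq ι] {m : ℕ} (hm : 0 < m) :
    latticePoints ((m : ℝ) • stdSimplex ℝ ι) =
      (fun (n : ι → ℕ) i => (n i : ℝ)) '' (piAntidiag univ m : Finset (ι → ℕ)) := by
  ext x
  simp only [latticePoints, mem_ofPred_eq, mem_smul_stdSimplex (Nat.cast_pos.2 hm), mem_image,
    mem_coe, Finset.mem_piAntidiag, Finset.mem_univ, implies_true, and_true]
  constructor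
  · rintro ⟨⟨hx0, hxm⟩, hx⟩
    have hnat : ∀ i, ∃ n : ℕ, x i = n := fun i => by
      obtain ⟨z, hz⟩ := hx i
      have hz0 : 0 ≤ z := by have := hx0 i; rw [hz] at this; exact_mod_cast this
      lift z to ℕ using hz0 with n
      exact ⟨n, by rw [hz, Int.cast_natCast]⟩
    choose n hn using hnat
    refine ⟨n, ?_, funext fun i => (hn i).symm⟩
    simp only [hn] at hxm
    exact_mod_cast hxm
  · rintro ⟨n, hn, rfl⟩
    exact ⟨⟨fun i => Nat.cast_nonneg _, by simp [← hn]⟩, fun i => ⟨n i, rfl⟩⟩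

end Simplex

theorem card_piAntidiag_univ_fin (k m : ℕ) :
    (piAntidiag univ m : Finset (Fin (k + 1) → ℕ)).card = (k + m).choose k := by
  rw [← map_sym_eq_piAntidiag, card_map, sym_univ, card_univ, Sym.card_sym_eq_choose,
    Fintype.card_fin, Nat.add_right_comm, Nat.add_sub_cancel, Nat.choose_symm_add]

theorem ncard_latticePoints_smul_stdSimplex (k : ℕ) {m : ℕ} (hm : 0 < m) :
    (latticePoints ((m : ℝ) • stdSimplex ℝ (Fin (k + 1)))).ncard = (k + m).choose k := by
  have hcast : Injective fun (n : Fin (k + 1) → ℕ) i => (n i : ℝ) :=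
    fun _ _ h => funext fun i => Nat.cast_injective (congrFun h i)
  rw [latticePoints_smul_stdSimplex hm, hcast.injOn.ncard_image, ncard_coe_finset,
    card_piAntidiag_univ_fin]

section ExtendByZeroPair

variable {ι κ V : Type*} (σ : ι → V) (τ : κ → V)

noncomputable def extendByZeroPair : (ι → ℝ) × (κ → ℝ) →ₗ[ℝ] V → ℝ :=
  (ExtendByZero.linearMap ℝ σ).coprod (ExtendByZero.linearMap ℝ τ)

theorem extendByZeroPair_apply (x : (ι → ℝ) × (κ → ℝ)) :
    extendByZeroPair σ τ x = extend σ x.1 0 + extend τ x.2 0 :=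
  rfl

variable {σ τ}

theorem Function.Injective.extend_single [DecidableEq ι] [DecidableEq V] {M : Type*} [Zero M]
    (hσ : Injective σ) (i : ι) (a : M) : extend σ (Pi.single i a) 0 = Pi.single (σ i) a := by
  funext v
  by_cases hv : ∃ k, σ k = v
  · obtain ⟨k, rfl⟩ := hv
    simp only [hσ.extend_apply, Pi.single_apply, hσ.eq_iff]
  · rw [extend_apply' _ _ _ hv, Pi.single_apply, if_neg fun h => hv ⟨i, h.symm⟩, Pi.zero_apply]

theorem convexHull_range_single_add_single [Fintype ι] [Fintype κ] [DecidableEq ι]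
    [DecidableEq κ] [DecidableEq V] (hσ : Injective σ) (hτ : Injective τ) :
    convexHull ℝ (range fun ij : ι × κ => Pi.single (σ ij.1) (1 : ℝ) + Pi.single (τ ij.2) 1) =
      extendByZeroPair σ τ '' (stdSimplex ℝ ι ×ˢ stdSimplex ℝ κ) := by
  rw [← convexHull_rangle_single_eq_stdSimplex, ← convexHull_rangle_single_eq_stdSimplex,
    ← convexHull_prod, LinearMap.image_convexHull, prod_range_range_eq, ← range_comp]
  congr 2
  funext ij
  simp [extendByZeroPair_apply, hσ.extend_single, hτ.extend_single]

variable {i₀ : ι} {j₀ : κ}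

theorem extendByZeroPair_apply_left (hσ : Injective σ) (hστ : ∀ i j, σ i = τ j → i = i₀ ∧ j = j₀)
    {i : ι} (hi : i ≠ i₀) (x : (ι → ℝ) × (κ → ℝ)) : extendByZeroPair σ τ x (σ i) = x.1 i := by
  rw [extendByZeroPair_apply, Pi.add_apply, hσ.extend_apply,
    extend_apply' _ _ _ fun ⟨j, hj⟩ => hi (hστ i j hj.symm).1, Pi.zero_apply, add_zero]

theorem extendByZeroPair_apply_right (hτ : Injective τ) (hστ : ∀ i j, σ i = τ j → i = i₀ ∧ j = j₀)
    {j : κ} (hj : j ≠ j₀) (x : (ι → ℝ) × (κ → ℝ)) : extendByZeroPair σ τ x (τ j) = x.2 j := by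
  rw [extendByZeroPair_apply, Pi.add_apply, hτ.extend_apply,
    extend_apply' _ _ _ fun ⟨i, hi⟩ => hj (hστ i j hi).2, Pi.zero_apply, zero_add]

variable [Fintype ι] [Fintype κ] [DecidableEq ι] [DecidableEq κ]

theorem injOn_extendByZeroPair (hσ : Injective σ) (hτ : Injective τ)
    (hστ : ∀ i j, σ i = τ j → i = i₀ ∧ j = j₀) (c d : ℝ) :
    InjOn (extendByZeroPair σ τ) {x | ∑ i, x.1 i = c ∧ ∑ j, x.2 j = d} := by
  rintro ⟨f, g⟩ ⟨hf, hg⟩ ⟨f', g'⟩ ⟨hf', hg'⟩ h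
  have hfg : f = f' := eq_of_sum_eq_of_forall_ne (i₀ := i₀) (hf.trans hf'.symm) fun i hi => by
    simpa only [extendByZeroPair_apply_left hσ hστ hi] using congrFun h (σ i)
  have hgg : g = g' := eq_of_sum_eq_of_forall_ne (i₀ := j₀) (hg.trans hg'.symm) fun j hj => by
    simpa only [extendByZeroPair_apply_right hτ hστ hj] using congrFun h (τ j)
  rw [hfg, hgg]

theorem latticePoints_extendByZeroPair_image_prod (hσ : Injective σ) (hτ : Injective τ)
    (hστ : ∀ i j, σ i = τ j → i = i₀ ∧ j = j₀) {A : Set (ι → ℝ)} {B : Set (κ → ℝ)}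
    (hA : ∀ f ∈ A, ∃ z : ℤ, ∑ i, f i = z) (hB : ∀ g ∈ B, ∃ z : ℤ, ∑ j, g j = z) :
    latticePoints (extendByZeroPair σ τ '' (A ×ˢ B)) =
      extendByZeroPair σ τ '' (latticePoints A ×ˢ latticePoints B) := by
  ext x
  constructor
  · rintro ⟨⟨⟨f, g⟩, ⟨hfA, hgB⟩, rfl⟩, hx⟩
    refine ⟨(f, g), ⟨⟨hfA, exists_int_apply_of_sum (i₀ := i₀) (hA f hfA) fun i hi => ?_⟩,
      ⟨hgB, exists_int_apply_of_sum (i₀ := j₀) (hB g hgB) fun j hj => ?_⟩⟩, rfl⟩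
    · simpa only [extendByZeroPair_apply_left hσ hστ hi] using hx (σ i)
    · simpa only [extendByZeroPair_apply_right hτ hστ hj] using hx (τ j)
  · rintro ⟨⟨f, g⟩, ⟨⟨hfA, hf⟩, ⟨hgB, hg⟩⟩, rfl⟩
    refine ⟨⟨(f, g), ⟨hfA, hgB⟩, rfl⟩, fun v => ?_⟩
    obtain ⟨z, hz⟩ := exists_int_extend_apply (σ := σ) hf v
    obtain ⟨w, hw⟩ := exists_int_extend_apply (σ := τ) hg v
    exact ⟨z + w, by rw [extendByZeroPair_apply, Pi.add_apply, hz, hw]; push_cast; rfl⟩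

end ExtendByZeroPair

theorem rho_mk {d : ℕ} (i j : Fin d) : rho s(i, j) = Pi.single i (1 : ℝ) + Pi.single j 1 := by
  funext t
  simp [rho, Pi.single_apply]

theorem Sym2.mk_eq_mk_of_val_eq {n : ℕ} {a b c d : Fin n} (hac : a.val = c.val)
    (hbd : b.val = d.val) : s(a, b) = s(c, d) := by
  rw [Fin.ext hac, Fin.ext hbd]

section ApexGraph

variable (p q : ℕ)

def leftIncl : Fin (p + 1) → Fin (p + q + 1) :=
  Fin.castLE (by omega)

def rightIncl : Fin (q + 1) → Fin (p + q + 1) :=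
  Fin.cases 0 fun j => ⟨p + 1 + j, by omega⟩

variable {p q}

@[simp]
theorem val_leftIncl (i : Fin (p + 1)) : (leftIncl p q i).val = i.val :=
  rfl

@[simp]
theorem rightIncl_zero : rightIncl p q 0 = 0 :=
  rfl

@[simp]
theorem val_rightIncl_succ (j : Fin q) : (rightIncl p q j.succ).val = p + 1 + j :=
  rfl

theorem leftIncl_injective : Injective (leftIncl p q) :=
  Fin.castLE_injective _

theorem rightIncl_injective : Injective (rightIncl p q) :=
  Fin.cons_injective_iff.2 ⟨fun ⟨j, hj⟩ => by simp [Fin.ext_iff] at hj,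
    fun j j' h => by simpa [Fin.ext_iff] using h⟩

theorem leftIncl_eq_rightIncl {i : Fin (p + 1)} {j : Fin (q + 1)}
    (h : leftIncl p q i = rightIncl p q j) : i = 0 ∧ j = 0 := by
  cases j using Fin.cases with
  | zero => exact ⟨leftIncl_injective h, rfl⟩
  | succ j =>
    have := congrArg Fin.val h
    rw [val_leftIncl, val_rightIncl_succ] at this
    omega

theorem apexGraph_edges_eq_range :
    {e : Sym2 (Fin (p + q + 1)) |
      (∃ j : Fin (p + q + 1), e = s(⟨0, by omega⟩, j)) ∨
      (∃ i j : Fin (p + q + 1), 1 ≤ i.val ∧ i.val ≤ p ∧ p + 1 ≤ j.val ∧ e = s(i, j))} =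
      range fun ij : Fin (p + 1) × Fin (q + 1) => s(leftIncl p q ij.1, rightIncl p q ij.2) := by
  ext e
  simp only [mem_ofPred_eq, Set.mem_range, Prod.exists]
  constructor
  · rintro (⟨j, rfl⟩ | ⟨i, j, hi, hip, hpj, rfl⟩)
    · have hj := j.isLt
      obtain hj0 | hjp | hpj : j.val = 0 ∨ j.val ≤ p ∨ p < j.val := by omega
      · exact ⟨0, 0, Sym2.mk_eq_mk_of_val_eq rfl hj0.symm⟩
      · exact ⟨⟨j, by omega⟩, 0, Sym2.eq_swap.trans (Sym2.mk_eq_mk_of_val_eq rfl rfl)⟩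
      · exact ⟨0, Fin.succ ⟨j - p - 1, by omega⟩,
          Sym2.mk_eq_mk_of_val_eq rfl (by rw [val_rightIncl_succ, Fin.val_mk]; omega)⟩
    · have hj := j.isLt
      exact ⟨⟨i, by omega⟩, Fin.succ ⟨j - p - 1, by omega⟩,
        Sym2.mk_eq_mk_of_val_eq rfl (by rw [val_rightIncl_succ, Fin.val_mk]; omega)⟩
  · rintro ⟨i, j, rfl⟩
    cases j using Fin.cases with
    | zero => exact Or.inl ⟨leftIncl p q i, Sym2.eq_swap.trans (Sym2.mk_eq_mk_of_val_eq rfl rfl)⟩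
    | succ j =>
      cases i using Fin.cases with
      | zero => exact Or.inl ⟨rightIncl p q j.succ, Sym2.mk_eq_mk_of_val_eq rfl rfl⟩
      | succ i => exact Or.inr ⟨_, _, by simp, by simp, by simp, rfl⟩

end ApexGraph

/-- Let `p, q ≥ 1` and let `G` be the graph on `{0,1,…,p+q}`
consisting of the complete bipartite graph with parts `V₁ = {1,…,p}` and
`V₂ = {p+1,…,p+q}`, a loop at vertex `0`, and all edges `{0,j}` for
`1 ≤ j ≤ p+q`.  Then for every positive integer `m`, the number of lattice
points in the `m`-th dilate of the edge polytope `P_G` equals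
`C(p+m, p) · C(q+m, q)`. -/
theorem stmt10 (p q m : ℕ) (hm : 0 < m) :
    Set.ncard {x : Fin (p + q + 1) → ℝ |
        x ∈ (m : ℝ) • convexHull ℝ
          (rho '' {e : Sym2 (Fin (p + q + 1)) |
            (∃ j : Fin (p + q + 1), e = s(⟨0, by omega⟩, j)) ∨
            (∃ i j : Fin (p + q + 1),
              1 ≤ i.val ∧ i.val ≤ p ∧ p + 1 ≤ j.val ∧ e = s(i, j))}) ∧
        ∀ t, ∃ z : ℤ, x t = (z : ℝ)} =
      Nat.choose (p + m) p * Nat.choose (q + m) q := by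
  have hsum : ∀ {k : ℕ}, ∀ f ∈ (m : ℝ) • stdSimplex ℝ (Fin (k + 1)), ∑ i, f i = m :=
    fun _ hf => ((mem_smul_stdSimplex (Nat.cast_pos.2 hm)).1 hf).2
  have hσ := leftIncl_injective (p := p) (q := q)
  have hτ := rightIncl_injective (p := p) (q := q)
  have hστ : ∀ i j, leftIncl p q i = rightIncl p q j → i = 0 ∧ j = 0 :=
    fun _ _ => leftIncl_eq_rightIncl
  rw [apexGraph_edges_eq_range, ← range_comp]
  simp only [comp_def, rho_mk]
  rw [convexHull_range_single_add_single hσ hτ, ← image_smul_set, smul_set_prod]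
  change (latticePoints _).ncard = _
  rw [latticePoints_extendByZeroPair_image_prod hσ hτ hστ
      (fun f hf => ⟨m, by rw [hsum f hf, Int.cast_natCast]⟩)
      (fun g hg => ⟨m, by rw [hsum g hg, Int.cast_natCast]⟩),
    InjOn.ncard_image, ncard_prod, ncard_latticePoints_smul_stdSimplex p hm,
    ncard_latticePoints_smul_stdSimplex q hm]
  refine (injOn_extendByZeroPair hσ hτ hστ m m).mono ?_
  rintro x ⟨hf, hg⟩
  exact ⟨hsum _ hf.1, hsum _ hg.1⟩
end

section
/- Let G be a finite graph allowing loops such that both ρ(e) and ρ(f) are vertices of P_G, where e is a loop at i and f is a loop at j with i ≠ j, and suppose {i,j} ∈ E(G) (condition (*)). Then the convex hull of {ρ(e), ρ(f)} is an edge of P_G; specifically, the face of P_G cut out by the supporting hyperplane {x : x_i + x_j = 2} is exactly the segment conv{2e_i, 2e_j} from 2e_i to 2e_j, which contains the point e_i + e_j. -/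
lemma rho_mk_s18 {d : ℕ} (a b t : Fin d) :
    rho s(a, b) t = (if t = a then (1 : ℝ) else 0) + (if t = b then 1 else 0) := rfl

lemma rho_mid {d : ℕ} (i j : Fin d) (hij : i ≠ j) :
    rho s(i, j) ∈ segment ℝ (rho s(i, i)) (rho s(j, j)) := by
  refine ⟨1/2, 1/2, by norm_num, by norm_num, by norm_num, ?_⟩
  funext t
  simp only [Pi.add_apply, Pi.smul_apply, smul_eq_mul, rho_mk_s18]
  by_cases h1 : t = i <;> by_cases h2 : t = j <;>
    first
      | (exact absurd (h1.symm.trans h2) hij)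
      | (simp [h1, h2]; try ring)

lemma rho_char {d : ℕ} (i j : Fin d) (hij : i ≠ j) (g : Sym2 (Fin d)) :
    (rho g) i + (rho g) j ≤ 2 ∧
    ((rho g) i + (rho g) j = 2 → rho g ∈ segment ℝ (rho s(i, i)) (rho s(j, j))) := by
  have key : ∀ c : Fin d, (if i = c then (1 : ℝ) else 0) + (if j = c then 1 else 0) ≤ 1 := by
    intro c
    split_ifs with h1 h2 <;> first
      | (exact absurd (h1.trans h2.symm) hij)
      | norm_num
  induction g using Sym2.inductionOn with
  | hf a b =>
    have hre : (rho s(a, b)) i + (rho s(a, b)) j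
        = ((if i = a then (1:ℝ) else 0) + (if j = a then 1 else 0))
          + ((if i = b then (1:ℝ) else 0) + (if j = b then 1 else 0)) := by
      simp only [rho_mk_s18]; ring
    constructor
    · rw [hre]; linarith [key a, key b]
    · intro h
      rw [hre] at h
      have ha : a = i ∨ a = j := by
        by_contra hc
        push_neg at hc
        have h1 : (if i = a then (1:ℝ) else 0) + (if j = a then 1 else 0) = 0 := by
          rw [if_neg (fun hh => hc.1 hh.symm), if_neg (fun hh => hc.2 hh.symm)]; ring
        linarith [key b]
      have hb : b = i ∨ b = j := by
        by_contra hc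
        push_neg at hc
        have h1 : (if i = b then (1:ℝ) else 0) + (if j = b then 1 else 0) = 0 := by
          rw [if_neg (fun hh => hc.1 hh.symm), if_neg (fun hh => hc.2 hh.symm)]; ring
        linarith [key a]
      rcases ha with rfl | rfl <;> rcases hb with rfl | rfl
      · exact left_mem_segment ℝ _ _
      · exact rho_mid a b hij
      · rw [show s(a, b) = s(b, a) from Sym2.eq_swap]; exact rho_mid b a hij
      · exact right_mem_segment ℝ _ _

/-- Let `G` be a finite graph allowing loops with loops
`e = {i,i}` and `f = {j,j}`, `i ≠ j`, such that `{i,j} ∈ E(G)` (condition (*)),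
and suppose `ρ(e)` and `ρ(f)` are vertices of `P_G`.  Then the convex hull of
`{ρ(e), ρ(f)}` is an edge of `P_G`: the hyperplane `{x : x_i + x_j = 2}`
supports `P_G`, and the face it cuts out is exactly the segment from
`2e_i` to `2e_j`. -/
theorem stmt18 (d : ℕ) (E : Set (Sym2 (Fin d))) (i j : Fin d) (hij : i ≠ j)
    (he : s(i, i) ∈ E) (hf : s(j, j) ∈ E) (hij' : s(i, j) ∈ E)
    (hvi : rho s(i, i) ∉ convexHull ℝ (rho '' (E \ {s(i, i)})))
    (hvj : rho s(j, j) ∉ convexHull ℝ (rho '' (E \ {s(j, j)}))) :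
    (∀ x ∈ convexHull ℝ (rho '' E), x i + x j ≤ 2) ∧
    {x ∈ convexHull ℝ (rho '' E) | x i + x j = 2} =
      segment ℝ (rho s(i, i)) (rho s(j, j)) := by
  have hlin : IsLinearMap ℝ (fun x : Fin d → ℝ => x i + x j) :=
    ⟨fun a b => by simp [Pi.add_apply]; ring, fun c x => by simp [Pi.smul_apply]; ring⟩
  have hineq : ∀ x ∈ convexHull ℝ (rho '' E), x i + x j ≤ 2 := by
    intro x hx
    refine convexHull_min ?_ (convex_halfSpace_le hlin 2) hx
    rintro y ⟨g, hg, rfl⟩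
    exact (rho_char i j hij g).1
  refine ⟨hineq, ?_⟩
  ext x
  constructor
  · rintro ⟨hx, hxe⟩
    rw [convexHull_eq] at hx
    obtain ⟨ι, t, w, z, hw0, hw1, hz, hx⟩ := hx
    subst hx
    -- sum form
    have hcm : t.centerMass w z = ∑ k ∈ t, w k • z k := by
      rw [Finset.centerMass_eq_of_sum_1 _ _ hw1]
    have hsum : ∑ k ∈ t, w k * (2 - (z k i + z k j)) = 0 := by
      have h1 : (t.centerMass w z) i + (t.centerMass w z) j
          = ∑ k ∈ t, w k * (z k i + z k j) := by
        rw [hcm]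
        simp only [Finset.sum_apply, Pi.smul_apply, smul_eq_mul]
        rw [← Finset.sum_add_distrib]
        apply Finset.sum_congr rfl
        intro k _; ring
      have h2 : ∑ k ∈ t, w k * 2 = 2 := by
        rw [← Finset.sum_mul, hw1, one_mul]
      have := hxe
      simp only [h1] at this
      calc ∑ k ∈ t, w k * (2 - (z k i + z k j))
          = (∑ k ∈ t, w k * 2) - ∑ k ∈ t, w k * (z k i + z k j) := by
            rw [← Finset.sum_sub_distrib]; apply Finset.sum_congr rfl; intro k _; ring
        _ = 0 := by rw [h2, this]; ring
    have hzero : ∀ k ∈ t, w k * (2 - (z k i + z k j)) = 0 := by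
      refine (Finset.sum_eq_zero_iff_of_nonneg ?_).1 hsum
      intro k hk
      obtain ⟨g, hg, hgz⟩ := hz k hk
      have h1 := (rho_char i j hij g).1
      rw [hgz] at h1
      have h2 := hw0 k hk
      nlinarith
    have hseg : ∀ k ∈ t.filter (fun k => w k ≠ 0),
        z k ∈ segment ℝ (rho s(i, i)) (rho s(j, j)) := by
      intro k hk
      rw [Finset.mem_filter] at hk
      obtain ⟨hkt, hkw⟩ := hk
      have h0 := hzero k hkt
      have hck : z k i + z k j = 2 := by
        rcases mul_eq_zero.1 h0 with h | h
        · exact absurd h hkw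
        · linarith
      obtain ⟨g, hg, hgz⟩ := hz k hkt
      rw [← hgz]
      apply (rho_char i j hij g).2
      rw [hgz]; exact hck
    rw [← Finset.centerMass_filter_ne_zero (w := w) (z := z)]
    apply (convex_segment _ _).centerMass_mem
    · intro k hk; exact hw0 k (Finset.filter_subset _ _ hk)
    · rw [Finset.sum_filter_ne_zero, hw1]; norm_num
    · exact hseg
  · intro hx
    have hiE : rho s(i, i) ∈ convexHull ℝ (rho '' E) :=
      subset_convexHull ℝ _ ⟨_, he, rfl⟩
    have hjE : rho s(j, j) ∈ convexHull ℝ (rho '' E) :=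
      subset_convexHull ℝ _ ⟨_, hf, rfl⟩
    refine ⟨(convex_convexHull ℝ _).segment_subset hiE hjE hx, ?_⟩
    obtain ⟨a, b, ha, hb, hab, rfl⟩ := hx
    simp only [Pi.add_apply, Pi.smul_apply, smul_eq_mul, rho_mk_s18]
    simp [hij, hij.symm]
    linarith
end
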